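/- For all integers c ≥ 1 and n ≥ 2, the domination number of the directed n-constrained de Bruijn graph on n+c symbols (whose vertices are the partial n-permutations of [n+c]) satisfies (1/(c+2)) · (n+c)!/c! ≤ γ(cDB⁺(n+c,n,n)) ≤ (n+c−1) · (n+c−1)!/(c+1)!. -/

import Mathlib

/-- A sequence `x` of length `n` over the alphabet `Fin d` is `t`-constrained if
equal symbols occur at positions at distance at least `t`. -/
def dbConstrained (d t n : ℕ) (x : Fin n → Fin d) : Prop :=
  ∀ i j : Fin n, i < j → x i = x j → t ≤ (j : ℕ) - (i : ℕ)

/-- The vertex set `V(d,t,n)` of the `t`-constrained de Bruijn graph: all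
`t`-constrained sequences of length `n` over a `d`-letter alphabet. -/
abbrev dbVtx (d t n : ℕ) : Type := {x : Fin n → Fin d // dbConstrained d t n x}

/-- `dbShift x y` holds when there is a directed de Bruijn edge from `x` to `y`,
i.e. `y` is obtained from `x` by deleting its first symbol and appending a new
last symbol. -/
def dbShift {d t n : ℕ} (x y : dbVtx d t n) : Prop :=
  ∀ (i : Fin n) (h : (i : ℕ) + 1 < n), y.val i = x.val ⟨(i : ℕ) + 1, h⟩

/-- `S` is a dominating set of the directed `t`-constrained de Bruijn graph
`cDB⁺(d,t,n)`: every vertex is dominated by (equal to, or an out-neighbor of)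
some element of `S`. -/
def dbDirDominating {d t n : ℕ} (S : Set (dbVtx d t n)) : Prop :=
  ∀ v : dbVtx d t n, ∃ s ∈ S, s = v ∨ dbShift s v

/-- The domination number `γ(cDB⁺(d,t,n))` of the directed `t`-constrained
de Bruijn graph. -/
noncomputable def gammaDir (d t n : ℕ) : ℕ :=
  sInf {k | ∃ S : Set (dbVtx d t n), S.Finite ∧ S.ncard = k ∧ dbDirDominating S}

/-- Adjacency in the undirected `t`-constrained de Bruijn graph `cDB(d,t,n)`:
edge directions are ignored and loops are removed. -/
def dbAdj {d t n : ℕ} (x y : dbVtx d t n) : Prop :=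
  x ≠ y ∧ (dbShift x y ∨ dbShift y x)

/-- `S` is a dominating set of the undirected graph `cDB(d,t,n)`: every vertex
is dominated by (equal to, or adjacent to) some element of `S`. -/
def dbUndirDominating {d t n : ℕ} (S : Set (dbVtx d t n)) : Prop :=
  ∀ v : dbVtx d t n, ∃ s ∈ S, s = v ∨ dbAdj s v

/-- The domination number `γ(cDB(d,t,n))` of the undirected `t`-constrained
de Bruijn graph. -/
noncomputable def gammaUndir (d t n : ℕ) : ℕ :=
  sInf {k | ∃ S : Set (dbVtx d t n), S.Finite ∧ S.ncard = k ∧ dbUndirDominating S}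

/-
Lower bound: a vertex dominates itself and at most `c + 1` out-neighbours, because an
out-neighbour of `s` is determined by its last symbol, which must avoid the `n - 1` symbols of the
tail of `s`. Hence `(c + 2) γ ≥ |V| = (n + c)! / c!`.

Upper bound: fix a symbol `o`. For every injective tail `t` of length `n - 1` whose first symbol is
not `o`, choose one vertex `a t` (a symbol `a ∉ t` prepended to `t`), with `a = o` whenever
`o ∉ t`. A vertex starting with `o` is of this
form, and any other vertex `v` is an out-neighbour of the vertex chosen for the tail
`(v₀, …, v_{n-2})`. There are `(n + c - 1) · (n + c - 1)! / (c + 1)!` such tails.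
-/

open Finset Function

instance (d t n : ℕ) : DecidablePred (dbConstrained d t n) := fun _ => by
  unfold dbConstrained; infer_instance

instance (d t n : ℕ) : DecidableRel (@dbShift d t n) := fun _ _ => by
  unfold dbShift; infer_instance

def Equiv.embeddingFinSuccOfApplyZero {α : Type*} (k : ℕ) (a : α) :
    {t : Fin (k + 1) ↪ α // t 0 = a} ≃ (Fin k ↪ {x // x ≠ a}) where
  toFun t := ⟨fun i => ⟨t.1 i.succ,
      fun h => Fin.succ_ne_zero i (t.1.injective (h.trans t.2.symm))⟩,
    fun i j h => Fin.succ_injective _ (t.1.injective (congrArg Subtype.val h))⟩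
  invFun f := ⟨⟨Fin.cons a (Subtype.val ∘ f), Fin.cons_injective_iff.2
    ⟨fun ⟨i, hi⟩ => (f i).2 hi, Subtype.val_injective.comp f.injective⟩⟩, rfl⟩
  left_inv t := by
    ext i
    cases i using Fin.cases with
    | zero => exact t.2.symm
    | succ i => rfl
  right_inv f := by ext; rfl

theorem Fintype.card_embedding_fin_succ_apply_zero_ne {α : Type*} [Fintype α] [DecidableEq α]
    (k : ℕ) (a : α) :
    Fintype.card {t : Fin (k + 1) ↪ α // t 0 ≠ a} =
      (Fintype.card α - 1) * (Fintype.card α - 1).descFactorial k := by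
  rw [Fintype.card_subtype_compl, Fintype.card_congr (Equiv.embeddingFinSuccOfApplyZero k a),
    Fintype.card_embedding_eq, Fintype.card_embedding_eq, Fintype.card_fin, Fintype.card_fin,
    Fintype.card_subtype_compl, Fintype.card_subtype_eq]
  have : Nonempty α := ⟨a⟩
  obtain ⟨m, hm⟩ := Nat.exists_eq_add_one_of_ne_zero (Fintype.card_ne_zero (α := α))
  rw [hm, Nat.succ_descFactorial_succ, Nat.add_sub_cancel, Nat.succ_mul, Nat.add_sub_cancel]

theorem dbConstrained_self_iff_injective {d n : ℕ} (x : Fin n → Fin d) :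
    dbConstrained d n n x ↔ Injective x := by
  refine ⟨fun h i j hx => ?_, fun h i j hij hx => absurd (h hx) hij.ne⟩
  by_contra hne
  rcases Fin.lt_or_lt_of_ne hne with hlt | hlt
  · have := h i j hlt hx; omega
  · have := h j i hlt hx.symm; omega

theorem card_dbVtx_self (d n : ℕ) : Fintype.card (dbVtx d n n) = d.descFactorial n := by
  rw [Fintype.card_congr ((Equiv.subtypeEquivRight dbConstrained_self_iff_injective).trans
    (Equiv.subtypeInjectiveEquivEmbedding _ _)), Fintype.card_embedding_eq, Fintype.card_fin,
    Fintype.card_fin]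

theorem dbShift_iff_init_eq_tail {d t m : ℕ} {x y : dbVtx d t (m + 1)} :
    dbShift x y ↔ Fin.init y.val = Fin.tail x.val :=
  ⟨fun h => funext fun i => h i.castSucc (by simp), fun h i hi => congrFun h ⟨i, by omega⟩⟩

section Domination

variable {d t n : ℕ}

theorem gammaDir_le_ncard {S : Set (dbVtx d t n)} (hS : dbDirDominating S) :
    gammaDir d t n ≤ S.ncard :=
  Nat.sInf_le ⟨S, S.toFinite, rfl, hS⟩

theorem exists_dbDirDominating_ncard_eq_gammaDir :
    ∃ S : Set (dbVtx d t n), dbDirDominating S ∧ S.ncard = gammaDir d t n := by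
  obtain ⟨S, -, hcard, hS⟩ := Nat.sInf_mem (s := {k | ∃ S : Set (dbVtx d t n), S.Finite ∧
    S.ncard = k ∧ dbDirDominating S}) ⟨_, Set.univ, Set.finite_univ, rfl,
      fun v => ⟨v, trivial, Or.inl rfl⟩⟩
  exact ⟨S, hS, hcard⟩

def dbOutNbhd (s : dbVtx d t n) : Finset (dbVtx d t n) := {v | dbShift s v}

@[simp]
theorem mem_dbOutNbhd {s v : dbVtx d t n} : v ∈ dbOutNbhd s ↔ dbShift s v := by
  simp [dbOutNbhd]

theorem card_le_mul_ncard_of_dbDirDominating {k : ℕ}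
    (hk : ∀ s : dbVtx d t n, #(insert s (dbOutNbhd s)) ≤ k)
    {S : Set (dbVtx d t n)} (hS : dbDirDominating S) :
    Fintype.card (dbVtx d t n) ≤ k * S.ncard := by
  classical
  rw [Set.ncard_eq_toFinset_card', mul_comm, ← Finset.card_univ]
  refine (card_le_card fun v _ => ?_).trans
    (card_biUnion_le_card_mul _ (fun s => insert s (dbOutNbhd s)) k fun s _ => hk s)
  obtain ⟨s, hs, hsv⟩ := hS v
  refine mem_biUnion.2 ⟨s, Set.mem_toFinset.2 hs, ?_⟩
  rcases hsv with rfl | h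
  · exact mem_insert_self _ _
  · exact mem_insert_of_mem (mem_dbOutNbhd.2 h)

theorem card_dbVtx_le_mul_gammaDir {k : ℕ}
    (hk : ∀ s : dbVtx d t n, #(insert s (dbOutNbhd s)) ≤ k) :
    Fintype.card (dbVtx d t n) ≤ k * gammaDir d t n := by
  obtain ⟨S, hS, hcard⟩ := exists_dbDirDominating_ncard_eq_gammaDir (d := d) (t := t) (n := n)
  exact hcard ▸ card_le_mul_ncard_of_dbDirDominating hk hS

end Domination

theorem dbShift.eq_of_last_eq {d t m : ℕ} {s v w : dbVtx d t (m + 1)} (hv : dbShift s v)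
    (hw : dbShift s w) (h : v.val (Fin.last m) = w.val (Fin.last m)) : v = w := by
  refine Subtype.ext ?_
  rw [← Fin.snoc_init_self v.val, ← Fin.snoc_init_self w.val, dbShift_iff_init_eq_tail.1 hv,
    dbShift_iff_init_eq_tail.1 hw, h]

theorem card_dbOutNbhd_le {d m : ℕ} (s : dbVtx d (m + 1) (m + 1)) :
    #(dbOutNbhd s) ≤ d - m := by
  have hs := (dbConstrained_self_iff_injective _).1 s.2
  calc #(dbOutNbhd s) ≤ #(univ.image (Fin.tail s.val))ᶜ := by
        refine card_le_card_of_injOn (fun v => v.val (Fin.last m)) (fun v hv => ?_)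
          (fun v hv w hw => (mem_dbOutNbhd.1 hv).eq_of_last_eq (mem_dbOutNbhd.1 hw))
        simp only [coe_compl, Set.mem_compl_iff, mem_coe, mem_image, mem_univ, true_and]
        rintro ⟨i, hi⟩
        rw [← dbShift_iff_init_eq_tail.1 (mem_dbOutNbhd.1 hv)] at hi
        exact (Fin.castSucc_lt_last i).ne ((dbConstrained_self_iff_injective _).1 v.2 hi)
    _ = d - m := by
        rw [card_compl, card_image_of_injective (f := Fin.tail s.val) _
          (hs.comp (Fin.succ_injective _)), card_univ, Fintype.card_fin, Fintype.card_fin]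

theorem descFactorial_le_mul_gammaDir (d m : ℕ) :
    d.descFactorial (m + 1) ≤ (d - m + 1) * gammaDir d (m + 1) (m + 1) := by
  rw [← card_dbVtx_self]
  exact card_dbVtx_le_mul_gammaDir fun s =>
    (card_insert_le _ _).trans (Nat.add_le_add_right (card_dbOutNbhd_le s) 1)

section UpperBound

variable {d k : ℕ}

def dbConsVtx (a : Fin d) (t : Fin (k + 1) ↪ Fin d) (ha : a ∉ Set.range t) :
    dbVtx d (k + 2) (k + 2) :=
  ⟨Fin.cons a t, (dbConstrained_self_iff_injective _).2
    (Fin.cons_injective_iff.2 ⟨ha, t.injective⟩)⟩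

theorem dbDirDominating_range_dbConsVtx (o : Fin d) (head : (Fin (k + 1) ↪ Fin d) → Fin d)
    (head_notMem : ∀ t : Fin (k + 1) ↪ Fin d, head t ∉ Set.range t)
    (head_eq : ∀ t : Fin (k + 1) ↪ Fin d, o ∉ Set.range t → head t = o) :
    dbDirDominating (Set.range fun t : {t : Fin (k + 1) ↪ Fin d // t 0 ≠ o} =>
      dbConsVtx (head t.1) t.1 (head_notMem t.1)) := by
  intro v
  have hv := (dbConstrained_self_iff_injective _).1 v.2
  by_cases h0 : v.val 0 = o
  · let t : Fin (k + 1) ↪ Fin d := ⟨Fin.tail v.val, hv.comp (Fin.succ_injective _)⟩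
    have ho : o ∉ Set.range t := by
      rintro ⟨i, hi⟩
      exact Fin.succ_ne_zero i (hv (hi.trans h0.symm))
    refine ⟨_, ⟨⟨t, fun h => ho ⟨0, h⟩⟩, rfl⟩, Or.inl (Subtype.ext ?_)⟩
    simp only [dbConsVtx, head_eq t ho, ← h0]
    exact Fin.cons_self_tail v.val
  · let t : Fin (k + 1) ↪ Fin d := ⟨Fin.init v.val, hv.comp (Fin.castSucc_injective _)⟩
    refine ⟨_, ⟨⟨t, h0⟩, rfl⟩, Or.inr (dbShift_iff_init_eq_tail.2 ?_)⟩
    exact (Fin.tail_cons (α := fun _ => Fin d) (head t) t).symm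

theorem gammaDir_le_mul_descFactorial (hkd : k + 1 < d) :
    gammaDir d (k + 2) (k + 2) ≤ (d - 1) * (d - 1).descFactorial k := by
  let o : Fin d := ⟨0, by omega⟩
  have head_exists (t : Fin (k + 1) ↪ Fin d) :
      ∃ a, a ∉ Set.range t ∧ (o ∉ Set.range t → a = o) := by
    by_cases ho : o ∈ Set.range t
    · obtain ⟨a, ha⟩ : ∃ a, a ∉ Set.range t := by
        by_contra! h
        have := Fintype.card_le_of_surjective t h
        simp only [Fintype.card_fin] at this
        omega
      exact ⟨a, ha, absurd ho⟩
    · exact ⟨o, ho, fun _ => rfl⟩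
  choose head head_notMem head_eq using head_exists
  calc gammaDir d (k + 2) (k + 2)
      ≤ (Set.range fun t : {t : Fin (k + 1) ↪ Fin d // t 0 ≠ o} =>
          dbConsVtx (head t.1) t.1 (head_notMem t.1)).ncard :=
        gammaDir_le_ncard (dbDirDominating_range_dbConsVtx o head head_notMem head_eq)
    _ ≤ Fintype.card {t : Fin (k + 1) ↪ Fin d // t 0 ≠ o} := by
        rw [← Nat.card_coe_set_eq, ← Nat.card_eq_fintype_card]
        exact Finite.card_range_le _
    _ = (d - 1) * (d - 1).descFactorial k := by
        rw [Fintype.card_embedding_fin_succ_apply_zero_ne, Fintype.card_fin]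

end UpperBound

theorem Nat.cast_factorial_div_factorial_of_add_eq {K : Type*} [DivisionSemiring K] [CharZero K]
    {m k j : ℕ} (h : k + j = m) : (m.factorial : K) / j.factorial = m.descFactorial k := by
  rw [← Nat.cast_div (Nat.factorial_dvd_factorial (by omega))
      (Nat.cast_ne_zero.2 (Nat.factorial_ne_zero j)),
    Nat.descFactorial_eq_div (by omega), show m - k = j by omega]

theorem gammaDir_partial_permutations_general (n c : ℕ) (hn : 2 ≤ n) :
    (1 / ((c : ℚ) + 2)) * (((n + c).factorial : ℚ) / (c.factorial : ℚ))
      ≤ (gammaDir (n + c) n n : ℚ) ∧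
    (gammaDir (n + c) n n : ℚ) ≤
      (((n + c - 1) : ℕ) : ℚ) * ((n + c - 1).factorial : ℚ) / ((c + 1).factorial : ℚ) := by
  obtain ⟨k, rfl⟩ : ∃ k, n = k + 2 := ⟨n - 2, by omega⟩
  have lower :
      (k + 2 + c).descFactorial (k + 2) ≤ (c + 2) * gammaDir (k + 2 + c) (k + 2) (k + 2) := by
    have := descFactorial_le_mul_gammaDir (k + 2 + c) (k + 1)
    rwa [show k + 2 + c - (k + 1) + 1 = c + 2 by omega] at this
  have upper := gammaDir_le_mul_descFactorial (d := k + 2 + c) (k := k) (by omega)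
  rw [Nat.cast_factorial_div_factorial_of_add_eq (k := k + 2) (j := c) rfl, mul_div_assoc,
    Nat.cast_factorial_div_factorial_of_add_eq (show k + (c + 1) = k + 2 + c - 1 by omega)]
  constructor
  · rw [one_div_mul_eq_div, div_le_iff₀' (by positivity)]
    exact_mod_cast lower
  · exact_mod_cast upper

/-- for `c ≥ 1`, `n ≥ 2`,
`(1/(c+2)) * (n+c)!/c! ≤ γ(cDB⁺(n+c,n,n)) ≤ (n+c-1) * (n+c-1)!/(c+1)!`. -/
theorem gammaDir_partial_permutations (n c : ℕ) (hc : 1 ≤ c) (hn : 2 ≤ n) :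
    (1 / ((c : ℚ) + 2)) * (((n + c).factorial : ℚ) / (c.factorial : ℚ))
      ≤ (gammaDir (n + c) n n : ℚ) ∧
    (gammaDir (n + c) n n : ℚ) ≤
      (((n + c - 1) : ℕ) : ℚ) * ((n + c - 1).factorial : ℚ) / ((c + 1).factorial : ℚ) :=
  gammaDir_partial_permutations_general n c hn
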